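/- arXiv:2002.11995 — 4 statements merged into one kernel-verified Lean document; each statement's English description precedes it below -/
import Mathlib

section
/- Suppose d₁ = 0, d₀ > 0, and β > μ(1 + d₀/α). Then W has exactly two fixed points (x, γ(x)) with x ∈ {0, α(β-μ)/(μd₀) - 1}, where γ(x) = αx/(μ(1+x)), and α(β-μ)/(μd₀) - 1 > 0. -/
/-!
Eliminating `y` through the second equation, `μ y = α x / (1 + x)`, turns the first one into
`x (α (β - μ) - μ d₀ (1 + x)) = 0`, whose roots are `x = 0` and `x = α (β - μ) / (μ d₀) - 1`;
the condition on `β` is exactly positivity of the second root.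
-/

lemma fixedPoint_iff_nullclines (α β μ d₀ x y : ℝ) :
    (β * y - α * x / (1 + x) - d₀ * x + x = x ∧ α * x / (1 + x) - μ * y + y = y) ↔
      β * y = α * x / (1 + x) + d₀ * x ∧ μ * y = α * x / (1 + x) := by
  constructor <;> rintro ⟨h₁, h₂⟩ <;> constructor <;> linarith

lemma nullclines_iff {α β μ d₀ x y : ℝ} (hμ : μ ≠ 0) (h1x : 1 + x ≠ 0) :
    (β * y = α * x / (1 + x) + d₀ * x ∧ μ * y = α * x / (1 + x)) ↔
      y = α * x / (μ * (1 + x)) ∧ x * (α * (β - μ) - μ * d₀ * (1 + x)) = 0 := by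
  have hy : μ * y = α * x / (1 + x) ↔ y = α * x / (μ * (1 + x)) := by
    rw [eq_div_iff h1x, eq_div_iff (mul_ne_zero hμ h1x)]
    constructor <;> intro h <;> linear_combination h
  rw [hy, and_comm]
  refine and_congr_right fun hγ => ?_
  subst hγ
  field_simp
  constructor <;> intro h <;> linear_combination h

lemma mul_sub_mul_one_add_eq_zero_iff {a c x : ℝ} (hc : c ≠ 0) :
    x * (a - c * (1 + x)) = 0 ↔ x = 0 ∨ x = a / c - 1 := by
  rw [mul_eq_zero, sub_eq_zero, eq_sub_iff_add_eq, add_comm, eq_div_iff hc, mul_comm,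
    eq_comm (a := a)]

lemma one_lt_div_of_lt_mul_one_add_div {α β μ d₀ : ℝ} (hα : 0 < α) (hμ : 0 < μ)
    (hd₀ : 0 < d₀) (hβμ : μ * (1 + d₀ / α) < β) :
    1 < α * (β - μ) / (μ * d₀) := by
  rw [one_lt_div (by positivity)]
  have : μ * (1 + d₀ / α) * α = μ * α + μ * d₀ := by field_simp
  linarith [mul_lt_mul_of_pos_right hβμ hα]

theorem stmt_2_general (α β μ d₀ : ℝ) (hα : 0 < α) (hμ : 0 < μ)
    (hd₀ : 0 < d₀) (hβμ : β > μ * (1 + d₀ / α)) :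
    α * (β - μ) / (μ * d₀) - 1 > 0 ∧
    {p : ℝ × ℝ | 0 ≤ p.1 ∧ 0 ≤ p.2 ∧
        (β * p.2 - α * p.1 / (1 + p.1) - d₀ * p.1 + p.1,
         α * p.1 / (1 + p.1) - μ * p.2 + p.2) = p} =
      {((0 : ℝ), (0 : ℝ)),
       (α * (β - μ) / (μ * d₀) - 1,
        α * (α * (β - μ) / (μ * d₀) - 1) / (μ * (1 + (α * (β - μ) / (μ * d₀) - 1))))} := by
  have hx₂ : α * (β - μ) / (μ * d₀) - 1 > 0 :=
    sub_pos.2 (one_lt_div_of_lt_mul_one_add_div hα hμ hd₀ hβμ)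
  have hfixed : ∀ {x y : ℝ}, 0 ≤ x →
      (β * y - α * x / (1 + x) - d₀ * x + x = x ∧ α * x / (1 + x) - μ * y + y = y ↔
        y = α * x / (μ * (1 + x)) ∧ (x = 0 ∨ x = α * (β - μ) / (μ * d₀) - 1)) := fun hx => by
    rw [fixedPoint_iff_nullclines, nullclines_iff hμ.ne' (by positivity),
      mul_sub_mul_one_add_eq_zero_iff (by positivity)]
  refine ⟨hx₂, Set.ext fun ⟨x, y⟩ => ?_⟩
  simp only [Set.mem_ofPred_eq, Set.mem_insert_iff, Set.mem_singleton_iff, Prod.mk.injEq]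
  constructor
  · rintro ⟨hx, -, hfix⟩
    obtain ⟨rfl, rfl | rfl⟩ := (hfixed hx).1 hfix
    · simp
    · exact Or.inr ⟨rfl, rfl⟩
  · rintro (⟨rfl, rfl⟩ | ⟨rfl, rfl⟩)
    · exact ⟨le_rfl, le_rfl, (hfixed le_rfl).2 ⟨by simp, Or.inl rfl⟩⟩
    · exact ⟨hx₂.le, by positivity, (hfixed hx₂.le).2 ⟨rfl, Or.inr rfl⟩⟩

/-- If d₁ = 0, d₀ > 0 and β > μ(1 + d₀/α), then W has exactly two nonnegative
fixed points (0, γ(0)) = (0,0) and (x₂, γ(x₂)) with x₂ = α(β-μ)/(μd₀) - 1 > 0. -/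
theorem stmt_2 (α β μ d₀ : ℝ) (hα : 0 < α) (hβ : 0 < β) (hμ : 0 < μ)
    (hd₀ : 0 < d₀) (hβμ : β > μ * (1 + d₀ / α)) :
    α * (β - μ) / (μ * d₀) - 1 > 0 ∧
    {p : ℝ × ℝ | 0 ≤ p.1 ∧ 0 ≤ p.2 ∧
        (β * p.2 - α * p.1 / (1 + p.1) - d₀ * p.1 + p.1,
         α * p.1 / (1 + p.1) - μ * p.2 + p.2) = p} =
      {((0 : ℝ), (0 : ℝ)),
       (α * (β - μ) / (μ * d₀) - 1,
        α * (α * (β - μ) / (μ * d₀) - 1) / (μ * (1 + (α * (β - μ) / (μ * d₀) - 1))))} :=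
  stmt_2_general α β μ d₀ hα hμ hd₀ hβμ
end

section
/- Suppose d₁ > 0 and β > μ(1 + d₀/α). Then Δ := (d₀-d₁)² + 4αd₁(β-μ)/μ > 0 (in fact the quadratic d₁x² + (d₀+d₁)x + d₀ + α(1-β/μ) has a unique positive root x₂ = (√Δ - d₀ - d₁)/(2d₁) > 0), and W has exactly two nonnegative fixed points (0,0) and (x₂, αx₂/(μ(1+x₂))). -/
/-! The second component of the fixed-point equation forces `μ y = α x / (1 + x)`; substituting
this into the first component leaves `x * q x = 0` for the quadratic
`q x = d₁ x² + (d₀ + d₁) x + d₀ + α (1 - β / μ)`. The hypothesis on `β` makes the constant term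
of `q` negative, so its discriminant exceeds `(d₀ + d₁)²` and `q` has exactly one positive root,
the one with the `+ √Δ` sign. -/

lemma abs_lt_sqrt_discrim {a b c : ℝ} (ha : 0 < a) (hc : c < 0) : |b| < √(discrim a b c) := by
  rw [← Real.sqrt_sq_eq_abs]
  exact Real.sqrt_lt_sqrt (sq_nonneg b) (by unfold discrim; nlinarith)

lemma discrim_pos_of_neg {a b c : ℝ} (ha : 0 < a) (hc : c < 0) : 0 < discrim a b c :=
  Real.sqrt_pos.mp ((abs_nonneg b).trans_lt (abs_lt_sqrt_discrim ha hc))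

lemma quadratic_root_pos {a b c : ℝ} (ha : 0 < a) (hc : c < 0) :
    0 < (√(discrim a b c) - b) / (2 * a) :=
  div_pos (sub_pos.mpr ((le_abs_self b).trans_lt (abs_lt_sqrt_discrim ha hc))) (by positivity)

lemma quadratic_eq_zero_iff_of_pos {a b c x : ℝ} (ha : 0 < a) (hc : c < 0) (hx : 0 < x) :
    a * x ^ 2 + b * x + c = 0 ↔ x = (√(discrim a b c) - b) / (2 * a) := by
  have hs := abs_lt_sqrt_discrim (b := b) ha hc
  have hD : discrim a b c = √(discrim a b c) * √(discrim a b c) :=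
    (Real.mul_self_sqrt (discrim_pos_of_neg ha hc).le).symm
  rw [sq, quadratic_eq_zero_iff ha.ne' hD, neg_add_eq_sub]
  refine or_iff_left fun h => ?_
  have : (-b - √(discrim a b c)) / (2 * a) < 0 :=
    div_neg_of_neg_of_pos (by linarith [neg_abs_le b]) (by positivity)
  linarith

noncomputable def W (α β μ d₀ d₁ : ℝ) (p : ℝ × ℝ) : ℝ × ℝ :=
  (β * p.2 - α * p.1 / (1 + p.1) - (d₀ + d₁ * p.1) * p.1 + p.1,
    α * p.1 / (1 + p.1) - μ * p.2 + p.2)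

lemma W_eq_self_iff {α β μ d₀ d₁ x y : ℝ} (hμ : μ ≠ 0) (hx : 1 + x ≠ 0) :
    W α β μ d₀ d₁ (x, y) = (x, y) ↔
      y = α * x / (μ * (1 + x)) ∧
        x * (d₁ * x ^ 2 + (d₀ + d₁) * x + d₀ + α * (1 - β / μ)) = 0 := by
  have hsecond : α * x / (1 + x) - μ * y + y = y ↔ y = α * x / (μ * (1 + x)) := by
    rw [eq_div_iff (mul_ne_zero hμ hx), ← sub_eq_zero, add_sub_cancel_right,
      sub_eq_zero, div_eq_iff hx]
    constructor <;> intro h <;> linarith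
  rw [W, Prod.mk.injEq, and_comm, hsecond]
  refine and_congr_right ?_
  rintro rfl
  have hfirst : (β * (α * x / (μ * (1 + x))) - α * x / (1 + x) - (d₀ + d₁ * x) * x) * (1 + x) =
      -(x * (d₁ * x ^ 2 + (d₀ + d₁) * x + d₀ + α * (1 - β / μ))) := by
    field_simp
    ring
  rw [← neg_eq_zero, ← hfirst, mul_eq_zero, or_iff_left hx, add_eq_right]

lemma nonneg_fixed_points_W {α β μ d₀ d₁ x₂ : ℝ} (hα : 0 ≤ α) (hμ : 0 < μ) (hx₂ : 0 < x₂)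
    (hroots : ∀ x, 0 < x → (d₁ * x ^ 2 + (d₀ + d₁) * x + d₀ + α * (1 - β / μ) = 0 ↔ x = x₂)) :
    {p : ℝ × ℝ | 0 ≤ p.1 ∧ 0 ≤ p.2 ∧ W α β μ d₀ d₁ p = p} =
      {(0, 0), (x₂, α * x₂ / (μ * (1 + x₂)))} := by
  ext ⟨x, y⟩
  simp only [Set.mem_ofPred_eq, Set.mem_insert_iff, Set.mem_singleton_iff]
  constructor
  · rintro ⟨hx, -, hW⟩
    obtain ⟨rfl, hq⟩ := (W_eq_self_iff hμ.ne' (by positivity)).mp hW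
    rcases hx.eq_or_lt with rfl | hx
    · simp
    · rw [(hroots x hx).mp ((mul_eq_zero.mp hq).resolve_left hx.ne')]
      exact Or.inr rfl
  · rintro (h | h) <;> obtain ⟨rfl, rfl⟩ := Prod.mk.inj h
    · norm_num [W]
    · refine ⟨hx₂.le, by positivity, (W_eq_self_iff hμ.ne' (by positivity)).mpr ⟨rfl, ?_⟩⟩
      rw [(hroots x hx₂).mpr rfl, mul_zero]

theorem stmt_3_general (α β μ d₀ d₁ : ℝ) (hα : 0 < α) (hμ : 0 < μ)
    (hd₁ : 0 < d₁) (hβμ : β > μ * (1 + d₀ / α)) :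
    (d₀ - d₁) ^ 2 + 4 * α * d₁ * (β - μ) / μ > 0 ∧
    (Real.sqrt ((d₀ - d₁) ^ 2 + 4 * α * d₁ * (β - μ) / μ) - d₀ - d₁) / (2 * d₁) > 0 ∧
    (∀ x : ℝ, 0 < x →
      (d₁ * x ^ 2 + (d₀ + d₁) * x + d₀ + α * (1 - β / μ) = 0 ↔
        x = (Real.sqrt ((d₀ - d₁) ^ 2 + 4 * α * d₁ * (β - μ) / μ) - d₀ - d₁) / (2 * d₁))) ∧
    {p : ℝ × ℝ | 0 ≤ p.1 ∧ 0 ≤ p.2 ∧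
        (β * p.2 - α * p.1 / (1 + p.1) - (d₀ + d₁ * p.1) * p.1 + p.1,
         α * p.1 / (1 + p.1) - μ * p.2 + p.2) = p} =
      {((0 : ℝ), (0 : ℝ)),
       ((Real.sqrt ((d₀ - d₁) ^ 2 + 4 * α * d₁ * (β - μ) / μ) - d₀ - d₁) / (2 * d₁),
        α * ((Real.sqrt ((d₀ - d₁) ^ 2 + 4 * α * d₁ * (β - μ) / μ) - d₀ - d₁) / (2 * d₁)) /
          (μ * (1 + (Real.sqrt ((d₀ - d₁) ^ 2 + 4 * α * d₁ * (β - μ) / μ) - d₀ - d₁) / (2 * d₁))))} := by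
  have hc : d₀ + α * (1 - β / μ) < 0 := by
    have h1 : 1 + d₀ / α < β / μ := (lt_div_iff₀' hμ).mpr hβμ
    have h2 : α * (1 + d₀ / α) = α + d₀ := by field_simp
    linarith [mul_lt_mul_of_pos_left h1 hα]
  have hD : discrim d₁ (d₀ + d₁) (d₀ + α * (1 - β / μ)) =
      (d₀ - d₁) ^ 2 + 4 * α * d₁ * (β - μ) / μ := by
    unfold discrim; field_simp; ring
  have hroot : (√((d₀ - d₁) ^ 2 + 4 * α * d₁ * (β - μ) / μ) - d₀ - d₁) / (2 * d₁) =
      (√(discrim d₁ (d₀ + d₁) (d₀ + α * (1 - β / μ))) - (d₀ + d₁)) / (2 * d₁) := by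
    rw [hD, sub_add_eq_sub_sub]
  have hroots := fun x (hx : 0 < x) => quadratic_eq_zero_iff_of_pos (b := d₀ + d₁) hd₁ hc hx
  simp only [← add_assoc, ← hroot] at hroots
  have hpos := hroot ▸ quadratic_root_pos hd₁ hc
  exact ⟨hD ▸ discrim_pos_of_neg hd₁ hc, hpos, hroots, nonneg_fixed_points_W hα.le hμ hpos hroots⟩

/-- If d₁ > 0 and β > μ(1 + d₀/α), then Δ = (d₀-d₁)² + 4αd₁(β-μ)/μ > 0,
x₂ = (√Δ - d₀ - d₁)/(2d₁) is the unique positive root of the quadratic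
d₁x² + (d₀+d₁)x + d₀ + α(1-β/μ), and W has exactly two nonnegative fixed points. -/
theorem stmt_3 (α β μ d₀ d₁ : ℝ) (hα : 0 < α) (hβ : 0 < β) (hμ : 0 < μ)
    (hd₀ : 0 ≤ d₀) (hd₁ : 0 < d₁) (hβμ : β > μ * (1 + d₀ / α)) :
    (d₀ - d₁) ^ 2 + 4 * α * d₁ * (β - μ) / μ > 0 ∧
    (Real.sqrt ((d₀ - d₁) ^ 2 + 4 * α * d₁ * (β - μ) / μ) - d₀ - d₁) / (2 * d₁) > 0 ∧
    (∀ x : ℝ, 0 < x →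
      (d₁ * x ^ 2 + (d₀ + d₁) * x + d₀ + α * (1 - β / μ) = 0 ↔
        x = (Real.sqrt ((d₀ - d₁) ^ 2 + 4 * α * d₁ * (β - μ) / μ) - d₀ - d₁) / (2 * d₁))) ∧
    {p : ℝ × ℝ | 0 ≤ p.1 ∧ 0 ≤ p.2 ∧
        (β * p.2 - α * p.1 / (1 + p.1) - (d₀ + d₁ * p.1) * p.1 + p.1,
         α * p.1 / (1 + p.1) - μ * p.2 + p.2) = p} =
      {((0 : ℝ), (0 : ℝ)),
       ((Real.sqrt ((d₀ - d₁) ^ 2 + 4 * α * d₁ * (β - μ) / μ) - d₀ - d₁) / (2 * d₁),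
        α * ((Real.sqrt ((d₀ - d₁) ^ 2 + 4 * α * d₁ * (β - μ) / μ) - d₀ - d₁) / (2 * d₁)) /
          (μ * (1 + (Real.sqrt ((d₀ - d₁) ^ 2 + 4 * α * d₁ * (β - μ) / μ) - d₀ - d₁) / (2 * d₁))))} :=
  stmt_3_general α β μ d₀ d₁ hα hμ hd₁ hβμ
end

section
/- The map W₀ : S → S, W₀(x,y) = (βy - αx/(1+x) + x, αx/(1+x) - βy + y), is well defined (maps the simplex S = {(x,y) : x,y ≥ 0, x+y = 1} into itself) if and only if (β ∈ (0, 1/2) and 0 < α ≤ 1 + 2√(β(1-β))) or (β ∈ [1/2, 1] and 0 < α ≤ 2). -/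
/-!
On the simplex write `y = 1 - x` with `x ∈ [0, 1]`. The second coordinate of `W₀` is
`αx/(1+x) + (1 - β)(1 - x)`, nonnegative exactly when `β ≤ 1`, and clearing the denominator
`1 + x` turns nonnegativity of the first coordinate into nonnegativity of the quadratic
`q(x) = (1-β)x² + (1-α)x + β` on `[0, 1]`. For `β ≥ 1/2` the identity
`q(x) = (1-x)(β-(1-β)x) + (2-α)x` shows this is `q(1) = 2 - α ≥ 0`; for `β < 1/2` and
`1 < α ≤ 2` the vertex `(α-1)/(2(1-β))` lies in `[0, 1]`, so it is the discriminant condition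
`(α-1)² ≤ 4β(1-β)`.
-/

open Set

section Quadratic

variable {α β x : ℝ}

theorem quadratic_nonneg_of_le_one_add_two_sqrt (hβ0 : 0 ≤ β) (hβ1 : β < 1) (hx : 0 ≤ x)
    (hα : α ≤ 1 + 2 * √(β * (1 - β))) : 0 ≤ (1 - β) * x ^ 2 + (1 - α) * x + β := by
  rcases le_or_gt α 1 with hα1 | hα1
  · nlinarith [mul_nonneg hx hx]
  have hsq : √(β * (1 - β)) ^ 2 = β * (1 - β) := Real.sq_sqrt (by nlinarith)
  have hdisc : (α - 1) ^ 2 ≤ 4 * (β * (1 - β)) := by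
    nlinarith [Real.sqrt_nonneg (β * (1 - β))]
  -- `4(1-β) q(x) = (2(1-β)x - (α-1))² + 4β(1-β) - (α-1)²`
  nlinarith [sq_nonneg (2 * (1 - β) * x - (α - 1))]

theorem quadratic_nonneg_of_le_two (hβ : 1 / 2 ≤ β) (hα : α ≤ 2) (hx0 : 0 ≤ x) (hx1 : x ≤ 1) :
    0 ≤ (1 - β) * x ^ 2 + (1 - α) * x + β := by
  have hfactor : 0 ≤ (1 - x) * (β - (1 - β) * x) := mul_nonneg (by linarith) (by nlinarith)
  have hlin : 0 ≤ (2 - α) * x := mul_nonneg (by linarith) hx0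
  calc 0 ≤ (1 - x) * (β - (1 - β) * x) + (2 - α) * x := add_nonneg hfactor hlin
    _ = (1 - β) * x ^ 2 + (1 - α) * x + β := by ring

theorem le_one_add_two_sqrt_of_quadratic_nonneg (hβ : β < 1 / 2) (hα : α ≤ 2)
    (h : ∀ x ∈ Icc (0 : ℝ) 1, 0 ≤ (1 - β) * x ^ 2 + (1 - α) * x + β) :
    α ≤ 1 + 2 * √(β * (1 - β)) := by
  rcases le_or_gt α 1 with hα1 | hα1
  · linarith [Real.sqrt_nonneg (β * (1 - β))]
  have h1β : 0 < 1 - β := by linarith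
  set x₀ := (α - 1) / (2 * (1 - β)) with hx₀
  have hvertex : 2 * (1 - β) * x₀ = α - 1 := by rw [hx₀]; field_simp
  have hx₀0 : 0 ≤ x₀ := by positivity
  have hx₀1 : x₀ ≤ 1 := by rw [hx₀, div_le_one (by positivity)]; linarith
  have hq := h x₀ ⟨hx₀0, hx₀1⟩
  -- at the vertex, `4(1-β) q(x₀) = 4β(1-β) - (α-1)²`
  have hdisc : (α - 1) ^ 2 ≤ 4 * (β * (1 - β)) := by
    nlinarith [mul_le_mul_of_nonneg_left hq h1β.le]
  have hsqrt : (α - 1) / 2 ≤ √(β * (1 - β)) :=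
    Real.le_sqrt_of_sq_le (by nlinarith)
  linarith

theorem quadratic_nonneg_on_unitInterval_iff (hβ0 : 0 ≤ β) :
    (∀ x ∈ Icc (0 : ℝ) 1, 0 ≤ (1 - β) * x ^ 2 + (1 - α) * x + β) ↔
      (β < 1 / 2 ∧ α ≤ 1 + 2 * √(β * (1 - β))) ∨ (1 / 2 ≤ β ∧ α ≤ 2) := by
  constructor
  · intro h
    have hα : α ≤ 2 := by linarith [h 1 ⟨zero_le_one, le_rfl⟩]
    rcases lt_or_ge β (1 / 2) with hβ | hβ
    · exact Or.inl ⟨hβ, le_one_add_two_sqrt_of_quadratic_nonneg hβ hα h⟩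
    · exact Or.inr ⟨hβ, hα⟩
  · rintro (⟨hβ, hα⟩ | ⟨hβ, hα⟩) x ⟨hx0, hx1⟩
    · exact quadratic_nonneg_of_le_one_add_two_sqrt hβ0 (by linarith) hx0 hα
    · exact quadratic_nonneg_of_le_two hβ hα hx0 hx1

end Quadratic

section Simplex

variable {α β x : ℝ}

theorem first_coord_nonneg_iff (hx : 0 ≤ x) :
    0 ≤ β * (1 - x) - α * x / (1 + x) + x ↔ 0 ≤ (1 - β) * x ^ 2 + (1 - α) * x + β := by
  have hden : 0 < 1 + x := by linarith
  have hform : β * (1 - x) - α * x / (1 + x) + x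
      = ((1 - β) * x ^ 2 + (1 - α) * x + β) / (1 + x) := by
    field_simp
    ring
  rw [hform, le_div_iff₀ hden, zero_mul]

theorem second_coord_nonneg (hα : 0 ≤ α) (hβ : β ≤ 1) (hx0 : 0 ≤ x) (hx1 : x ≤ 1) :
    0 ≤ α * x / (1 + x) - β * (1 - x) + (1 - x) := by
  have hfrac : 0 ≤ α * x / (1 + x) := by positivity
  nlinarith [mul_nonneg (sub_nonneg.2 hβ) (sub_nonneg.2 hx1)]

theorem mapsTo_simplex_iff (hα : 0 ≤ α) :
    (∀ x y : ℝ, 0 ≤ x → 0 ≤ y → x + y = 1 →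
        0 ≤ β * y - α * x / (1 + x) + x ∧
        0 ≤ α * x / (1 + x) - β * y + y ∧
        (β * y - α * x / (1 + x) + x) + (α * x / (1 + x) - β * y + y) = 1) ↔
      β ≤ 1 ∧ ∀ x ∈ Icc (0 : ℝ) 1, 0 ≤ (1 - β) * x ^ 2 + (1 - α) * x + β := by
  constructor
  · intro h
    refine ⟨?_, fun x ⟨hx0, hx1⟩ => ?_⟩
    · have hβ1 := (h 0 1 le_rfl zero_le_one (zero_add 1)).2.1
      norm_num at hβ1
      exact hβ1
    · exact (first_coord_nonneg_iff hx0).1 (h x (1 - x) hx0 (by linarith) (by ring)).1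
  · rintro ⟨hβ, hq⟩ x y hx hy hxy
    obtain rfl : y = 1 - x := by linarith
    have hx1 : x ≤ 1 := by linarith
    exact ⟨(first_coord_nonneg_iff hx).2 (hq x ⟨hx, hx1⟩), second_coord_nonneg hα hβ hx hx1,
      by ring⟩

end Simplex

/-- W₀ maps the simplex S = {(x,y) : x,y ≥ 0, x+y = 1} into itself iff
(0 < β < 1/2 and 0 < α ≤ 1 + 2√(β(1-β))) or (1/2 ≤ β ≤ 1 and 0 < α ≤ 2). -/
theorem stmt_8 (α β : ℝ) (hα : 0 < α) (hβ : 0 < β) :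
    (∀ x y : ℝ, 0 ≤ x → 0 ≤ y → x + y = 1 →
        0 ≤ β * y - α * x / (1 + x) + x ∧
        0 ≤ α * x / (1 + x) - β * y + y ∧
        (β * y - α * x / (1 + x) + x) + (α * x / (1 + x) - β * y + y) = 1) ↔
      ((0 < β ∧ β < 1 / 2 ∧ 0 < α ∧ α ≤ 1 + 2 * Real.sqrt (β * (1 - β))) ∨
       (1 / 2 ≤ β ∧ β ≤ 1 ∧ 0 < α ∧ α ≤ 2)) := by
  rw [mapsTo_simplex_iff hα.le, quadratic_nonneg_on_unitInterval_iff hβ.le]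
  constructor
  · rintro ⟨hβ1, ⟨hβ2, hα2⟩ | ⟨hβ2, hα2⟩⟩
    · exact Or.inl ⟨hβ, hβ2, hα, hα2⟩
    · exact Or.inr ⟨hβ2, hβ1, hα, hα2⟩
  · rintro (⟨-, hβ2, -, hα2⟩ | ⟨hβ2, hβ1, -, hα2⟩)
    · exact ⟨by linarith, Or.inl ⟨hβ2, hα2⟩⟩
    · exact ⟨hβ1, Or.inr ⟨hβ2, hα2⟩⟩
end

section
/- If (α,β) ∈ (A ∪ B) \ {(2,1)}, where A = {(α,β) : 0 < β < 1/2, 0 < α ≤ 1 + 2√(β(1-β))} and B = {(α,β) : 1/2 ≤ β ≤ 1, 0 < α ≤ 2}, then |U'(x*)| < 1, i.e. the fixed point x* = (√(α²+4β²) - α)/(2β) of U(x) = β(1-x) - αx/(1+x) + x is attracting. -/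
/-!
Since `U'(x) = 1 - β - α/(1+x)²`, the claim `|U'(x*)| < 1` splits into `1 - U'(x*) > 0`, which is
clear, and `1 + U'(x*) > 0`. The fixed point equation `β x*² + α x* = β` turns the latter into
`1 + U'(x*) = ((2 - α) + 2 x* (1 - β)) / (1 + x*)`, positive because `x* > 0`, `α ≤ 2`, `β ≤ 1`
and one of the two inequalities is strict. On both regions `A` and `B` one has `α ≤ 2`, as
`√(β(1-β)) ≤ 1/2`.
-/

open Real

noncomputable section

def U (α β x : ℝ) : ℝ := β * (1 - x) - α * x / (1 + x) + x

def fixedPoint (α β : ℝ) : ℝ := (√(α ^ 2 + 4 * β ^ 2) - α) / (2 * β)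

end

variable {α β : ℝ}

theorem hasDerivAt_U {x : ℝ} (hx : 1 + x ≠ 0) :
    HasDerivAt (U α β) (1 - β - α / (1 + x) ^ 2) x := by
  have hquot : HasDerivAt (fun x : ℝ => α * x / (1 + x))
      ((α * 1 * (1 + x) - α * x * (0 + 1)) / (1 + x) ^ 2) x :=
    ((hasDerivAt_id x).const_mul α).div ((hasDerivAt_const x 1).add (hasDerivAt_id x)) hx
  refine ((((hasDerivAt_const x 1).sub (hasDerivAt_id x)).const_mul β).sub hquot).add
    (hasDerivAt_id x) |>.congr_deriv ?_
  field_simp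
  ring

theorem fixedPoint_pos (hβ : 0 < β) : 0 < fixedPoint α β := by
  have hlt : α < √(α ^ 2 + 4 * β ^ 2) :=
    (le_abs_self α).trans_lt <| by
      rw [← sqrt_sq_eq_abs]
      exact sqrt_lt_sqrt (sq_nonneg α) (by nlinarith)
  exact div_pos (by linarith) (by linarith)

theorem fixedPoint_quadratic (hβ : β ≠ 0) :
    β * fixedPoint α β ^ 2 + α * fixedPoint α β = β := by
  have hs : √(α ^ 2 + 4 * β ^ 2) ^ 2 = α ^ 2 + 4 * β ^ 2 := sq_sqrt (by positivity)
  unfold fixedPoint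
  generalize √(α ^ 2 + 4 * β ^ 2) = s at hs ⊢
  field_simp
  linear_combination hs

theorem two_sub_sub_div_eq_of_quadratic {t : ℝ} (ht : β * t ^ 2 + α * t = β) (ht1 : 1 + t ≠ 0) :
    2 - β - α / (1 + t) ^ 2 = ((2 - α) + 2 * t * (1 - β)) / (1 + t) := by
  field_simp
  linear_combination ht

theorem abs_deriv_U_fixedPoint_lt_one (hα : 0 ≤ α) (hβ : 0 < β) (hα2 : α ≤ 2) (hβ1 : β ≤ 1)
    (hstrict : α < 2 ∨ β < 1) : |deriv (U α β) (fixedPoint α β)| < 1 := by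
  set t := fixedPoint α β
  have ht : 0 < t := fixedPoint_pos hβ
  rw [(hasDerivAt_U (by positivity)).deriv, abs_sub_lt_iff]
  constructor
  · have hq : 0 ≤ α / (1 + t) ^ 2 := by positivity
    linarith
  · have hnum : 0 < (2 - α) + 2 * t * (1 - β) := by
      rcases hstrict with h | h <;> nlinarith
    have hpos : 0 < ((2 - α) + 2 * t * (1 - β)) / (1 + t) := by positivity
    rw [← two_sub_sub_div_eq_of_quadratic (fixedPoint_quadratic hβ.ne') (by positivity)] at hpos
    linarith

theorem sqrt_mul_one_sub_le_half (β : ℝ) : √(β * (1 - β)) ≤ 1 / 2 :=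
  sqrt_le_iff.mpr ⟨by norm_num, by nlinarith [sq_nonneg (β - 1 / 2)]⟩

/-- If (α,β) ∈ (A ∪ B) \ {(2,1)} then the fixed point x* of U is attracting:
|U'(x*)| < 1. -/
theorem stmt_13 (α β : ℝ)
    (hAB : (0 < β ∧ β < 1 / 2 ∧ 0 < α ∧ α ≤ 1 + 2 * Real.sqrt (β * (1 - β))) ∨
           (1 / 2 ≤ β ∧ β ≤ 1 ∧ 0 < α ∧ α ≤ 2))
    (hne : (α, β) ≠ (2, 1)) :
    |deriv (fun x : ℝ => β * (1 - x) - α * x / (1 + x) + x)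
        ((Real.sqrt (α ^ 2 + 4 * β ^ 2) - α) / (2 * β))| < 1 := by
  have hsqrt := sqrt_mul_one_sub_le_half β
  obtain ⟨hα, hβ, hα2, hβ1⟩ : 0 ≤ α ∧ 0 < β ∧ α ≤ 2 ∧ β ≤ 1 := by
    rcases hAB with h | h <;> refine ⟨?_, ?_, ?_, ?_⟩ <;> linarith
  have hstrict : α < 2 ∨ β < 1 := by
    by_contra! h
    exact hne (Prod.ext (le_antisymm hα2 h.1) (le_antisymm hβ1 h.2))
  exact abs_deriv_U_fixedPoint_lt_one hα hβ hα2 hβ1 hstrict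
end
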